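/- If a closed Φ-term t is canonical and t rewrites in one step to u in Φ, then ⟦t⟧ →v ⟦u⟧, i.e., the readbacks are related by one step of weak call-by-value reduction. -/

import Mathlib

/-- Untyped λ-terms over variables drawn from ℕ (a denumerable totally ordered set). -/
inductive Lam : Type
  | var : ℕ → Lam
  | lam : ℕ → Lam → Lam
  | app : Lam → Lam → Lam
deriving DecidableEq, Repr

namespace Lam

/-- Capture-permitting substitution M{N/x} (adequate for weak reduction of closed terms). -/
def subst : Lam → ℕ → Lam → Lam
  | var y, x, N => if y = x then N else var y
  | lam y M, x, N => if y = x then lam y M else lam y (subst M x N)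
  | app M₁ M₂, x, N => app (subst M₁ x N) (subst M₂ x N)

/-- Simultaneous substitution along a partial assignment of terms to variables. -/
def msubst : Lam → (ℕ → Option Lam) → Lam
  | var y, σ => (σ y).getD (var y)
  | lam y M, σ => lam y (msubst M (fun z => if z = y then none else σ z))
  | app M₁ M₂, σ => app (msubst M₁ σ) (msubst M₂ σ)

/-- The assignment sending each `xᵢ` to `tᵢ` (first match wins). -/
def substOf (xs : List ℕ) (ts : List Lam) : ℕ → Option Lam :=
  fun y => (xs.zip ts).lookup y

/-- Values: variables and abstractions. -/
def IsValue : Lam → Prop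
  | var _ => True
  | lam _ _ => True
  | app _ _ => False

/-- Weak call-by-value reduction. -/
inductive CbvStep : Lam → Lam → Prop
  | beta {x : ℕ} {M V : Lam} : IsValue V → CbvStep (app (lam x M) V) (subst M x V)
  | appL {M N L : Lam} : CbvStep M N → CbvStep (app M L) (app N L)
  | appR {M N L : Lam} : CbvStep M N → CbvStep (app L M) (app L N)

/-- A →v-normal form. -/
def CbvNormal (M : Lam) : Prop := ¬ ∃ N, CbvStep M N

/-- Free variables, as a finite set. -/
def fv : Lam → Finset ℕ
  | var x => {x}
  | lam x M => fv M \ {x}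
  | app M N => fv M ∪ fv N

/-- The sequence (without repetitions, in variable order) of free variables of `M`. -/
def fvList (M : Lam) : List ℕ := (fv M).sort (· ≤ ·)

def Closed (M : Lam) : Prop := fv M = ∅

/-- The size |M| of a λ-term. -/
def size : Lam → ℕ
  | var _ => 1
  | lam _ M => size M + 1
  | app M N => size M + size N + 1

end Lam

/-- `NSteps r n a b`: `a` reduces to `b` in exactly `n` `r`-steps. -/
def NSteps {α : Type*} (r : α → α → Prop) : ℕ → α → α → Prop
  | 0 => fun a b => a = b
  | n + 1 => fun a c => ∃ b, r a b ∧ NSteps r n b c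

/-- Terms of the constructor rewrite system Φ: variables, the binary function symbol
`app`, and for every λ-term `M` and variable `x` a constructor `c_{x,M}` (here `con x M`),
whose arity is the length of `FV(λx.M)`. -/
inductive PTerm : Type
  | var : ℕ → PTerm
  | app : PTerm → PTerm → PTerm
  | con : ℕ → Lam → List PTerm → PTerm

namespace PTerm

/-- Well-formed Φ-terms: every constructor is applied to as many arguments as its arity. -/
inductive WF : PTerm → Prop
  | var {x} : WF (var x)
  | app {u v} : WF u → WF v → WF (app u v)
  | con {x M ts} : ts.length = (Lam.fvList (Lam.lam x M)).length →
      (∀ t ∈ ts, WF t) → WF (con x M ts)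

/-- Constructor terms: built only from constructors. -/
inductive IsConTerm : PTerm → Prop
  | con {x M ts} : (∀ t ∈ ts, IsConTerm t) → IsConTerm (con x M ts)

/-- Canonical closed Φ-terms. -/
inductive Canonical : PTerm → Prop
  | con {t} : IsConTerm t → Canonical t
  | app {u v} : Canonical u → Canonical v → Canonical (app u v)

/-- Closed Φ-terms contain no variables. -/
inductive ClosedP : PTerm → Prop
  | app {u v} : ClosedP u → ClosedP v → ClosedP (app u v)
  | con {x M ts} : (∀ t ∈ ts, ClosedP t) → ClosedP (con x M ts)

/-- Substitution of Φ-terms for variables. -/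
def psubst (σ : ℕ → Option PTerm) : PTerm → PTerm
  | var y => (σ y).getD (var y)
  | app u v => app (psubst σ u) (psubst σ v)
  | con x M ts => con x M (ts.attach.map (fun t => psubst σ t.1))
decreasing_by
  all_goals simp_wf
  all_goals try have := List.sizeOf_lt_of_mem t.2
  all_goals omega

/-- The assignment sending each `xᵢ` to `tᵢ`. -/
def substOfP (xs : List ℕ) (ts : List PTerm) : ℕ → Option PTerm :=
  fun y => (xs.zip ts).lookup y

/-- Variables occurring in a Φ-term. -/
def pvars : PTerm → List ℕ
  | var y => [y]
  | app u v => pvars u ++ pvars v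
  | con _ _ ts => ts.attach.flatMap (fun t => pvars t.1)
decreasing_by
  all_goals simp_wf
  all_goals try have := List.sizeOf_lt_of_mem t.2
  all_goals omega

end PTerm

/-- The translation ⟨·⟩ from λ-terms to Φ-terms. -/
def transPhi : Lam → PTerm
  | .var x => .var x
  | .lam x M => .con x M ((Lam.fvList (.lam x M)).map .var)
  | .app M N => .app (transPhi M) (transPhi N)

/-- The readback ⟦·⟧ from Φ-terms to λ-terms. -/
def readback : PTerm → Lam
  | .var x => .var x
  | .app u v => .app (readback u) (readback v)
  | .con x M ts =>
      Lam.msubst (.lam x M)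
        (Lam.substOf (Lam.fvList (.lam x M)) (ts.attach.map (fun t => readback t.1)))
decreasing_by
  all_goals simp_wf
  all_goals try have := List.sizeOf_lt_of_mem t.2
  all_goals omega

/-- One-step rewriting in Φ: the rule app(c_{x,M}(x₁,…,xₙ), x) → ⟨M⟩ (matched variables
instantiated by constructor terms), closed under arbitrary contexts. -/
inductive PhiStep : PTerm → PTerm → Prop
  | root {x : ℕ} {M : Lam} {ts : List PTerm} {v : PTerm} :
      (∀ t ∈ ts, PTerm.IsConTerm t) → PTerm.IsConTerm v →
      ts.length = (Lam.fvList (.lam x M)).length →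
      PhiStep (.app (.con x M ts) v)
        (PTerm.psubst (PTerm.substOfP (Lam.fvList (.lam x M) ++ [x]) (ts ++ [v])) (transPhi M))
  | appL {u u' v} : PhiStep u u' → PhiStep (.app u v) (.app u' v)
  | appR {u v v'} : PhiStep v v' → PhiStep (.app u v) (.app u v')
  | conArg {x M ts₁ t t' ts₂} : PhiStep t t' →
      PhiStep (.con x M (ts₁ ++ t :: ts₂)) (.con x M (ts₁ ++ t' :: ts₂))

/-- Φ-normal forms. -/
def PhiNormal (t : PTerm) : Prop := ¬ ∃ u, PhiStep t u

/-!
Constructor terms are Φ-normal, so a step of a canonical term is never below a constructor: it is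
either a congruence step through `app`, mirrored by the congruence rules of →v, or a root step
`app(c_{x,M}(t⃗), v) → ⟨M⟩{t⃗/x⃗, v/x}`. The readback of that redex is the β_v-redex
`(λx. M{⟦t⃗⟧/x⃗}) ⟦v⟧` (⟦v⟧ is an abstraction), whose contractum `M{⟦t⃗⟧/x⃗}{⟦v⟧/x}` is the
readback of the right-hand side: readback commutes with instantiating `⟨M⟩`, and the two
substitutions merge into one simultaneous substitution because the `⟦tᵢ⟧` are closed.
-/

namespace List

variable {α β γ : Type*} [DecidableEq α]

theorem lookup_map_prodMap_id (f : β → γ) (l : List (α × β)) (k : α) :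
    (l.map (Prod.map id f)).lookup k = (l.lookup k).map f := by
  induction l with
  | nil => rfl
  | cons p l ih =>
    obtain ⟨a, b⟩ := p
    by_cases h : k = a
    · simp [h]
    · simp [lookup_cons, beq_false_of_ne h, ih]

theorem lookup_zip_map_right (xs : List α) (ts : List β) (f : β → γ) (k : α) :
    (xs.zip (ts.map f)).lookup k = ((xs.zip ts).lookup k).map f := by
  rw [zip_map_right, lookup_map_prodMap_id]

theorem lookup_zip_map_self (g : α → β) {xs : List α} {k : α} (hk : k ∈ xs) :
    (xs.zip (xs.map g)).lookup k = some (g k) := by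
  rw [← map_prod_left_eq_zip, lookup_graph g hk]

theorem lookup_zip_eq_none_of_notMem {xs : List α} (ts : List β) {k : α} (hk : k ∉ xs) :
    (xs.zip ts).lookup k = none :=
  lookup_eq_none_iff.mpr fun p hp => by
    have := (of_mem_zip (a := p.1) (b := p.2) hp).1
    simpa using fun h : k = p.1 => hk (h ▸ this)

theorem mem_right_of_lookup_zip_eq_some {xs : List α} {ts : List β} {k : α} {b : β}
    (h : (xs.zip ts).lookup k = some b) : b ∈ ts := by
  obtain ⟨l₁, l₂, hl, -⟩ := lookup_eq_some_iff.mp h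
  exact (of_mem_zip (a := k) (hl ▸ mem_append_right l₁ mem_cons_self)).2

theorem exists_lookup_zip_eq_some {xs : List α} {ts : List β} {k : α} (hk : k ∈ xs)
    (hlen : xs.length ≤ ts.length) : ∃ b ∈ ts, (xs.zip ts).lookup k = some b := by
  obtain ⟨b, hb⟩ : ∃ b, (xs.zip ts).lookup k = some b := by
    refine Option.ne_none_iff_exists'.mp fun hnone => ?_
    rw [← map_fst_zip hlen, mem_map] at hk
    obtain ⟨p, hp, rfl⟩ := hk
    simpa using lookup_eq_none_iff.mp hnone p hp
  exact ⟨b, mem_right_of_lookup_zip_eq_some hb, hb⟩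

theorem lookup_zip_append_singleton {xs : List α} {ts : List β} (hlen : xs.length = ts.length)
    {x : α} (hx : x ∉ xs) (v : β) (k : α) :
    ((xs ++ [x]).zip (ts ++ [v])).lookup k = if k = x then some v else (xs.zip ts).lookup k := by
  rw [zip_append hlen, lookup_append]
  by_cases hk : k = x
  · simp [hk, lookup_zip_eq_none_of_notMem ts hx]
  · simp [lookup_cons, beq_false_of_ne hk, hk]

end List

namespace Lam

theorem mem_fvList {M : Lam} {z : ℕ} : z ∈ fvList M ↔ z ∈ fv M := Finset.mem_sort _

theorem msubst_congr {M : Lam} {σ σ' : ℕ → Option Lam}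
    (h : ∀ z ∈ fv M, (σ z).getD (var z) = (σ' z).getD (var z)) :
    msubst M σ = msubst M σ' := by
  induction M generalizing σ σ' with
  | var y => exact h y (by simp [fv])
  | lam y N ih =>
    refine congrArg (lam y) (ih fun z hz => ?_)
    by_cases hzy : z = y
    · simp [hzy]
    · simpa [hzy] using h z (by simp [fv, hz, hzy])
  | app M₁ M₂ ih₁ ih₂ =>
    simp only [msubst]
    rw [ih₁ fun z hz => h z (by simp [fv, hz]), ih₂ fun z hz => h z (by simp [fv, hz])]

theorem subst_eq_self_of_notMem_fv {M : Lam} {x : ℕ} (h : x ∉ fv M) (V : Lam) :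
    subst M x V = M := by
  induction M with
  | var y =>
    simp only [fv, Finset.mem_singleton] at h
    simp [subst, Ne.symm h]
  | lam y N ih =>
    by_cases hyx : y = x
    · simp [subst, hyx]
    · simp [subst, hyx, ih (by simpa [fv, Ne.symm hyx] using h)]
  | app M₁ M₂ ih₁ ih₂ =>
    simp only [fv, Finset.mem_union, not_or] at h
    simp [subst, ih₁ h.1, ih₂ h.2]

theorem fv_msubst_subset (M : Lam) (σ : ℕ → Option Lam) :
    fv (msubst M σ) ⊆ (fv M).biUnion fun z => fv ((σ z).getD (var z)) := by
  induction M generalizing σ with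
  | var y => simp [msubst, fv]
  | lam y N ih =>
    intro w hw
    simp only [msubst, fv, Finset.mem_sdiff, Finset.mem_singleton] at hw
    obtain ⟨z, hz, hzw⟩ := Finset.mem_biUnion.mp (ih _ hw.1)
    by_cases hzy : z = y
    · simp [hzy, fv, hw.2] at hzw
    · simp only [hzy, if_false] at hzw
      exact Finset.mem_biUnion.mpr ⟨z, by simp [fv, hz, hzy], hzw⟩
  | app M₁ M₂ ih₁ ih₂ =>
    intro w hw
    simp only [msubst, fv, Finset.mem_union] at hw
    refine Finset.mem_biUnion.mpr ?_
    rcases hw with hw | hw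
    · obtain ⟨z, hz, hzw⟩ := Finset.mem_biUnion.mp (ih₁ _ hw)
      exact ⟨z, by simp [fv, hz], hzw⟩
    · obtain ⟨z, hz, hzw⟩ := Finset.mem_biUnion.mp (ih₂ _ hw)
      exact ⟨z, by simp [fv, hz], hzw⟩

theorem subst_msubst {M : Lam} {x : ℕ} {σ : ℕ → Option Lam} (hx : σ x = none)
    (hfresh : ∀ z ∈ fv M, ∀ N, σ z = some N → x ∉ fv N) (V : Lam) :
    subst (msubst M σ) x V = msubst M (fun z => if z = x then some V else σ z) := by
  induction M generalizing σ with
  | var y =>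
    by_cases hyx : y = x
    · simp [msubst, subst, hyx, hx]
    · cases hσ : σ y with
      | none => simp [msubst, subst, hyx, hσ]
      | some N =>
        simpa [msubst, hyx, hσ] using subst_eq_self_of_notMem_fv (hfresh y (by simp [fv]) N hσ) V
  | lam y N ih =>
    by_cases hyx : y = x
    · subst hyx
      simp only [msubst, subst, if_true]
      refine congrArg (lam y) (msubst_congr fun z _ => ?_)
      by_cases hz : z = y <;> simp [hz]
    · simp only [msubst, subst, hyx, if_false]
      rw [ih (by simp [hx]) fun z hz N hN => ?_]
      · refine congrArg (lam y) (msubst_congr fun z _ => ?_)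
        by_cases hzy : z = y <;> by_cases hzx : z = x <;> simp_all
      · by_cases hzy : z = y
        · simp [hzy] at hN
        · simp only [hzy, if_false] at hN
          exact hfresh z (by simp [fv, hz, hzy]) N hN
  | app M₁ M₂ ih₁ ih₂ =>
    simp only [msubst, subst]
    rw [ih₁ hx fun z hz => hfresh z (by simp [fv, hz]),
        ih₂ hx fun z hz => hfresh z (by simp [fv, hz])]

end Lam

namespace PTerm

theorem psubst_con (σ : ℕ → Option PTerm) (x : ℕ) (M : Lam) (ts : List PTerm) :
    psubst σ (con x M ts) = con x M (ts.map (psubst σ)) := by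
  simp [psubst]

theorem IsConTerm.phiNormal {t : PTerm} (ht : IsConTerm t) : PhiNormal t := by
  rintro ⟨u, hstep⟩
  induction hstep with
  | root => cases ht
  | appL => cases ht
  | appR => cases ht
  | conArg _ ih =>
    obtain ⟨hts⟩ := ht
    exact ih (hts _ (by simp))

end PTerm

open PTerm

theorem readback_app (u v : PTerm) :
    readback (app u v) = .app (readback u) (readback v) := by
  rw [readback]

theorem readback_con (x : ℕ) (M : Lam) (ts : List PTerm) :
    readback (con x M ts) =
      Lam.msubst (.lam x M) (Lam.substOf (Lam.fvList (.lam x M)) (ts.map readback)) := by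
  simp [readback]

theorem PTerm.IsConTerm.isValue_readback {t : PTerm} (ht : IsConTerm t) :
    Lam.IsValue (readback t) := by
  obtain ⟨_⟩ := ht
  simp [readback_con, Lam.msubst, Lam.IsValue]

theorem PTerm.ClosedP.fv_readback {t : PTerm} (hcl : ClosedP t) (hwf : WF t) :
    Lam.fv (readback t) = ∅ := by
  induction hcl with
  | app _ _ ih₁ ih₂ =>
    obtain _ | ⟨hw₁, hw₂⟩ := hwf
    simp [readback_app, Lam.fv, ih₁ hw₁, ih₂ hw₂]
  | @con x M ts _ ih =>
    obtain _ | _ | ⟨hlen, hwts⟩ := hwf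
    refine Finset.eq_empty_of_forall_notMem fun w hw => ?_
    rw [readback_con] at hw
    obtain ⟨z, hz, hzw⟩ := Finset.mem_biUnion.mp (Lam.fv_msubst_subset _ _ hw)
    obtain ⟨N, hN, hlookup⟩ := List.exists_lookup_zip_eq_some (ts := ts.map readback)
      (Lam.mem_fvList.mpr hz) (by simp [hlen])
    obtain ⟨s, hs, rfl⟩ := List.mem_map.mp hN
    simp [Lam.substOf, hlookup, ih s hs (hwts s hs)] at hzw

theorem readback_psubst_transPhi (M : Lam) (σ : ℕ → Option PTerm) :
    readback (psubst σ (transPhi M)) = Lam.msubst M fun z => (σ z).map readback := by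
  induction M generalizing σ with
  | var y =>
    cases h : σ y <;> simp [transPhi, psubst, Lam.msubst, readback, h]
  | lam y N ih =>
    simp only [transPhi, psubst_con, readback_con, List.map_map]
    refine Lam.msubst_congr fun z hz => ?_
    rw [Lam.substOf, List.lookup_zip_map_self _ (Lam.mem_fvList.mpr hz)]
    cases h : σ z <;> simp [psubst, readback, h]
  | app M₁ M₂ ih₁ ih₂ =>
    simp [transPhi, psubst, readback_app, Lam.msubst, ih₁, ih₂]

theorem cbvStep_readback_root {x : ℕ} {M : Lam} {ts : List PTerm} {v : PTerm}
    (hlen : ts.length = (Lam.fvList (.lam x M)).length)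
    (hts : ∀ s ∈ ts, Lam.fv (readback s) = ∅) (hv : Lam.IsValue (readback v)) :
    Lam.CbvStep (readback (app (con x M ts) v))
      (readback (psubst (substOfP (Lam.fvList (.lam x M) ++ [x]) (ts ++ [v])) (transPhi M))) := by
  set xs := Lam.fvList (.lam x M)
  set σ : ℕ → Option Lam := fun z => if z = x then none else Lam.substOf xs (ts.map readback) z
  have hx : x ∉ xs := by simp [xs, Lam.mem_fvList, Lam.fv]
  have hfresh : ∀ z ∈ Lam.fv M, ∀ N, σ z = some N → x ∉ Lam.fv N := by
    intro z _ N hN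
    by_cases hzx : z = x
    · simp [σ, hzx] at hN
    · simp only [σ, hzx, if_false, Lam.substOf] at hN
      obtain ⟨s, hs, rfl⟩ := List.mem_map.mp (List.mem_right_of_lookup_zip_eq_some hN)
      simp [hts s hs]
  have hcontractum : Lam.subst (Lam.msubst M σ) x (readback v) =
      Lam.msubst M fun z => (substOfP (xs ++ [x]) (ts ++ [v]) z).map readback := by
    rw [Lam.subst_msubst (by simp [σ]) hfresh]
    congr 1
    funext z
    rw [substOfP, List.lookup_zip_append_singleton hlen.symm hx]
    by_cases hzx : z = x
    · simp [hzx]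
    · simp [σ, hzx, Lam.substOf, List.lookup_zip_map_right]
  rw [readback_app, readback_con, readback_psubst_transPhi, ← hcontractum]
  exact .beta hv

/-- If a closed canonical Φ-term t rewrites in one step to u, then ⟦t⟧ →v ⟦u⟧. -/
theorem phiStep_readback (t u : PTerm) (hwf : PTerm.WF t) (hcl : PTerm.ClosedP t)
    (hcan : PTerm.Canonical t) (hstep : PhiStep t u) :
    Lam.CbvStep (readback t) (readback u) := by
  induction hstep with
  | root _ hv hlen =>
    obtain _ | ⟨_ | _ | ⟨-, hwts⟩, -⟩ := hwf
    obtain ⟨_ | ⟨hcts⟩, -⟩ := hcl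
    exact cbvStep_readback_root hlen (fun s hs => (hcts s hs).fv_readback (hwts s hs))
      hv.isValue_readback
  | appL _ ih =>
    obtain _ | ⟨hwu, -⟩ := hwf
    obtain ⟨hcu, -⟩ := hcl
    obtain ⟨⟨⟩⟩ | ⟨hcanu, -⟩ := hcan
    rw [readback_app, readback_app]
    exact .appL (ih hwu hcu hcanu)
  | appR _ ih =>
    obtain _ | ⟨-, hwv⟩ := hwf
    obtain ⟨-, hcv⟩ := hcl
    obtain ⟨⟨⟩⟩ | ⟨-, hcanv⟩ := hcan
    rw [readback_app, readback_app]
    exact .appR (ih hwv hcv hcanv)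
  | conArg h =>
    obtain ⟨hcon⟩ := hcan
    exact absurd ⟨_, .conArg h⟩ hcon.phiNormal
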